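/- Let (Sⁿ,F) be a Finsler sphere with reversibility λ and l(Sⁿ,F) ≥ π(1+1/λ). Then every closed geodesic c on (Sⁿ,F) having a self-intersection satisfies L(c) ≥ 2π(1+1/λ) and hence E(c) ≥ 2π²((λ+1)/λ)². Consequently, any closed geodesic with E(c) < 2π²((λ+1)/λ)² has no self-intersections. -/

import Mathlib

/-!
Basic framework: Finsler metrics on the unit sphere `Sⁿ ⊆ ℝ^{n+1}`,
lengths, energies, (closed) geodesics, geodesic loops, primeness,
distinctness, self-intersections and reversibility.
-/

open scoped RealInnerProductSpace
open Set intervalIntegral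

noncomputable section

/-- The ambient Euclidean space `ℝ^{n+1}`. -/
abbrev Evec (n : ℕ) := EuclideanSpace ℝ (Fin (n + 1))

/-- The standard round sphere `Sⁿ ⊆ ℝ^{n+1}`. -/
def unitSphere (n : ℕ) : Set (Evec n) := Metric.sphere (0 : Evec n) 1

/-- `v` is tangent to the sphere at `x`. -/
def IsTangentAt (n : ℕ) (x v : Evec n) : Prop := ⟪x, v⟫ = (0 : ℝ)

/-- A Finsler metric on the sphere `Sⁿ`, recorded via an ambient function
`F : ℝ^{n+1} × ℝ^{n+1} → ℝ` whose restriction to the tangent bundle of the sphere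
satisfies the axioms (F1)–(F3) of a Finsler metric:  smoothness away from the
zero section, positive 1-homogeneity in the tangent vector, and positive
definiteness of the fiberwise Hessian of `F²`. -/
structure FinslerMetric (n : ℕ) where
  F : Evec n → Evec n → ℝ
  nonneg : ∀ x v, 0 ≤ F x v
  /-- (F1): smoothness on the tangent bundle away from the zero section. -/
  smooth : ContDiffOn ℝ (⊤ : ℕ∞) (fun p : Evec n × Evec n => F p.1 p.2)
      {p | p.1 ∈ unitSphere n ∧ IsTangentAt n p.1 p.2 ∧ p.2 ≠ 0}
  /-- (F2): positive 1-homogeneity in the fiber variable. -/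
  homogeneous : ∀ x ∈ unitSphere n, ∀ v, ∀ a : ℝ, 0 < a → F x (a • v) = a * F x v
  /-- (F3): the fiberwise Hessian quadratic form
  `u ↦ (d²/ds²) F(x, y + s u)²|_{s=0}` of `F²` is positive definite. -/
  posdef : ∀ x ∈ unitSphere n, ∀ y, IsTangentAt n x y → y ≠ 0 →
      ∀ u, IsTangentAt n x u → u ≠ 0 →
      0 < iteratedDeriv 2 (fun s : ℝ => (F x (y + s • u)) ^ 2) 0

variable {n : ℕ}

/-- The Finsler length of the piece of the curve `c` between parameters `a` and `b`. -/
def curveLength (Φ : FinslerMetric n) (c : ℝ → Evec n) (a b : ℝ) : ℝ :=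
  ∫ t in a..b, Φ.F (c t) (deriv c t)

/-- The Finsler length of a closed curve (over one period). -/
def finslerLength (Φ : FinslerMetric n) (c : ℝ → Evec n) : ℝ := curveLength Φ c 0 1

/-- The energy of a closed curve (over one period). -/
def energy (Φ : FinslerMetric n) (c : ℝ → Evec n) : ℝ :=
  (1 / 2) * ∫ t in (0 : ℝ)..1, (Φ.F (c t) (deriv c t)) ^ 2

/-- The set of (piecewise-free, `C¹`) paths on the sphere from `p` to `q`,
parametrized by `[0,1]`. -/
def PathsOnSphere (n : ℕ) (p q : Evec n) : Set (ℝ → Evec n) :=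
  {γ | ContDiff ℝ 1 γ ∧ γ 0 = p ∧ γ 1 = q ∧ ∀ t, γ t ∈ unitSphere n}

/-- The (non-symmetric) Finsler distance from `p` to `q` on the sphere. -/
def finslerDist (Φ : FinslerMetric n) (p q : Evec n) : ℝ :=
  sInf (Set.image (fun γ => curveLength Φ γ 0 1) (PathsOnSphere n p q))

/-- `c` is locally the shortest path around parameter `t₀`. -/
def IsLocallyMinimizingAt (Φ : FinslerMetric n) (c : ℝ → Evec n) (t₀ : ℝ) : Prop :=
  ∃ ε > (0 : ℝ), ∀ t₁ t₂, t₀ - ε ≤ t₁ → t₁ ≤ t₂ → t₂ ≤ t₀ + ε →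
    curveLength Φ c t₁ t₂ = finslerDist Φ (c t₁) (c t₂)

/-- A closed geodesic of `(Sⁿ, F)`: a regular smooth curve `c : ℝ/ℤ → Sⁿ` of constant
speed which is locally the shortest path connecting nearby points on it. -/
def IsClosedGeodesic (Φ : FinslerMetric n) (c : ℝ → Evec n) : Prop :=
  ContDiff ℝ (⊤ : ℕ∞) c ∧ Function.Periodic c 1 ∧ (∀ t, c t ∈ unitSphere n) ∧
  (∀ t, deriv c t ≠ 0) ∧
  (∀ s t, Φ.F (c s) (deriv c s) = Φ.F (c t) (deriv c t)) ∧
  (∀ t₀ : ℝ, IsLocallyMinimizingAt Φ c t₀)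

/-- A (nonconstant) geodesic loop on `(Sⁿ, F)`: a curve `c : [0,1] → Sⁿ` with
`c 0 = c 1` which is regular, of constant speed, and locally shortest at all
interior parameters, but which need not close up smoothly at `c 0 = c 1`. -/
def IsGeodesicLoop (Φ : FinslerMetric n) (c : ℝ → Evec n) : Prop :=
  ContDiff ℝ (⊤ : ℕ∞) c ∧ c 0 = c 1 ∧ (∀ t, c t ∈ unitSphere n) ∧
  (∀ t ∈ Set.Icc (0 : ℝ) 1, deriv c t ≠ 0) ∧
  (∀ s ∈ Set.Icc (0 : ℝ) 1, ∀ t ∈ Set.Icc (0 : ℝ) 1,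
    Φ.F (c s) (deriv c s) = Φ.F (c t) (deriv c t)) ∧
  (∀ t₀ ∈ Set.Ioo (0 : ℝ) 1, ∃ ε > (0 : ℝ), ∀ t₁ t₂,
    t₁ ∈ Set.Icc (0 : ℝ) 1 → t₂ ∈ Set.Icc (0 : ℝ) 1 →
    t₀ - ε ≤ t₁ → t₁ ≤ t₂ → t₂ ≤ t₀ + ε →
    curveLength Φ c t₁ t₂ = finslerDist Φ (c t₁) (c t₂))

/-- The `m`-th iterate of a closed curve. -/
def iterateCurve (c : ℝ → Evec n) (m : ℕ) : ℝ → Evec n := fun t => c (m * t)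

/-- A prime closed geodesic: not an `m`-fold iterate (`m ≥ 2`) of any closed geodesic. -/
def IsPrimeClosedGeodesic (Φ : FinslerMetric n) (c : ℝ → Evec n) : Prop :=
  IsClosedGeodesic Φ c ∧
  ¬ ∃ (d : ℝ → Evec n) (m : ℕ), 2 ≤ m ∧ IsClosedGeodesic Φ d ∧ c = iterateCurve d m

/-- Two closed curves agree up to a parameter shift. -/
def SameGeodesic (c d : ℝ → Evec n) : Prop := ∃ θ : ℝ, ∀ t, c t = d (t + θ)

/-- A closed curve has no self-intersections: it is injective on `[0,1)`. -/
def NoSelfIntersections (c : ℝ → Evec n) : Prop :=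
  ∀ s ∈ Set.Ico (0 : ℝ) 1, ∀ t ∈ Set.Ico (0 : ℝ) 1, c s = c t → s = t

/-- The reversibility `λ = max {F(−X) : F(X) = 1}` of `(Sⁿ, F)`. -/
def reversibility (Φ : FinslerMetric n) : ℝ :=
  sSup {r : ℝ | ∃ x ∈ unitSphere n, ∃ v, IsTangentAt n x v ∧ Φ.F x v = 1 ∧ Φ.F x (-v) = r}

/-- The pinching condition `F² < c · g₀` on the sphere, where `g₀` is the round metric
of constant curvature `1` (so that `g₀(v,v) = ‖v‖²` in the ambient Euclidean space). -/
def MetricDominatedBy (Φ : FinslerMetric n) (c : ℝ) : Prop :=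
  ∀ x ∈ unitSphere n, ∀ v, IsTangentAt n x v → v ≠ 0 → (Φ.F x v) ^ 2 < c * ‖v‖ ^ 2

end


section Aux

variable {n : ℕ}

/-- Core construction: a piece of a closed geodesic between parameters `a` and `a+δ`
with equal endpoints, rescaled to `[0,1]`, is a geodesic loop of length `δ·v`. -/
lemma geodesicLoop_of_piece (Φ : FinslerMetric n) (c : ℝ → Evec n)
    (h : IsClosedGeodesic Φ c) (a δ : ℝ) (hδ : 0 < δ)
    (hend : c a = c (a + δ)) :
    IsGeodesicLoop Φ (fun u => c (a + δ * u)) ∧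
    finslerLength Φ (fun u => c (a + δ * u)) = δ * Φ.F (c 0) (deriv c 0) := by
  obtain ⟨hsm, hper, hsph, hreg, hcs, hmin⟩ := h
  set v : ℝ := Φ.F (c 0) (deriv c 0) with hv
  have hspeed : ∀ x : ℝ, Φ.F (c x) (deriv c x) = v := fun x => hcs x 0
  have hdiff : Differentiable ℝ c := hsm.differentiable (by simp)
  have hderiv : ∀ u : ℝ, HasDerivAt (fun u => c (a + δ * u))
      (δ • deriv c (a + δ * u)) u := by
    intro u
    have hg : HasDerivAt (fun u : ℝ => a + δ * u) δ u := by
      simpa using ((hasDerivAt_id u).const_mul δ).const_add a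
    have hc' : HasDerivAt c (deriv c (a + δ * u)) (a + δ * u) :=
      (hdiff _).hasDerivAt
    exact hc'.scomp u hg
  have hsp1 : ∀ u : ℝ, Φ.F (c (a + δ * u)) (deriv (fun u => c (a + δ * u)) u)
      = δ * v := by
    intro u
    rw [(hderiv u).deriv, Φ.homogeneous _ (hsph _) _ δ hδ, hspeed]
  have hlen : ∀ t₁ t₂ : ℝ, curveLength Φ c t₁ t₂ = (t₂ - t₁) * v := by
    intro t₁ t₂
    simp [curveLength, hspeed]
  have hlenloop : ∀ u₁ u₂ : ℝ,
      curveLength Φ (fun u => c (a + δ * u)) u₁ u₂ = (u₂ - u₁) * (δ * v) := by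
    intro u₁ u₂
    simp only [curveLength, hsp1, intervalIntegral.integral_const, smul_eq_mul]
  refine ⟨⟨?_, ?_, ?_, ?_, ?_, ?_⟩, ?_⟩
  · exact hsm.comp (contDiff_const.add (contDiff_const.mul contDiff_id))
  · simpa using hend
  · intro t; exact hsph _
  · intro t _
    rw [(hderiv t).deriv]
    exact smul_ne_zero hδ.ne' (hreg _)
  · intro s _ t _
    rw [hsp1 s, hsp1 t]
  · intro t₀ _
    obtain ⟨ε, hε, hm⟩ := hmin (a + δ * t₀)
    refine ⟨ε / δ, div_pos hε hδ, ?_⟩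
    intro u₁ u₂ _ _ h1 h2 h3
    have hεδ : δ * (ε / δ) = ε := mul_div_cancel₀ ε hδ.ne'
    have k1 : δ * (t₀ - ε / δ) ≤ δ * u₁ := mul_le_mul_of_nonneg_left h1 hδ.le
    have k2 : δ * u₁ ≤ δ * u₂ := mul_le_mul_of_nonneg_left h2 hδ.le
    have k3 : δ * u₂ ≤ δ * (t₀ + ε / δ) := mul_le_mul_of_nonneg_left h3 hδ.le
    have e1 : a + δ * t₀ - ε ≤ a + δ * u₁ := by
      have : δ * t₀ - ε ≤ δ * u₁ := by
        calc δ * t₀ - ε = δ * (t₀ - ε / δ) := by rw [mul_sub, hεδ]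
          _ ≤ δ * u₁ := k1
      linarith
    have e2 : a + δ * u₁ ≤ a + δ * u₂ := by linarith
    have e3 : a + δ * u₂ ≤ a + δ * t₀ + ε := by
      have : δ * u₂ ≤ δ * t₀ + ε := by
        calc δ * u₂ ≤ δ * (t₀ + ε / δ) := k3
          _ = δ * t₀ + ε := by rw [mul_add, hεδ]
      linarith
    have := hm (a + δ * u₁) (a + δ * u₂) e1 e2 e3
    rw [hlenloop, hlen] at *
    calc (u₂ - u₁) * (δ * v) = (a + δ * u₂ - (a + δ * u₁)) * v := by ring
      _ = finslerDist Φ (c (a + δ * u₁)) (c (a + δ * u₂)) := this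
  · show curveLength Φ (fun u => c (a + δ * u)) 0 1 = δ * v
    rw [hlenloop]; ring

/-- A self-intersecting closed geodesic has length at least twice the loop bound. -/
lemma key_length_bound (Φ : FinslerMetric n) (c : ℝ → Evec n)
    (h : IsClosedGeodesic Φ c) (B : ℝ)
    (hloop : ∀ d, IsGeodesicLoop Φ d → B ≤ finslerLength Φ d)
    (s t : ℝ) (hs : s ∈ Set.Ico (0 : ℝ) 1) (ht : t ∈ Set.Ico (0 : ℝ) 1)
    (hlt : s < t) (heq : c s = c t) :
    2 * B ≤ finslerLength Φ c := by
  set v : ℝ := Φ.F (c 0) (deriv c 0) with hv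
  have h1 := geodesicLoop_of_piece Φ c h s (t - s) (by linarith) (by
    rw [show s + (t - s) = t by ring]; exact heq)
  have h2 := geodesicLoop_of_piece Φ c h t (1 + s - t)
      (by rcases hs with ⟨hs0, _⟩; rcases ht with ⟨_, ht1⟩; linarith) (by
    rw [show t + (1 + s - t) = s + 1 by ring, h.2.1 s]; exact heq.symm)
  have b1 : B ≤ (t - s) * v := h1.2 ▸ hloop _ h1.1
  have b2 : B ≤ (1 + s - t) * v := h2.2 ▸ hloop _ h2.1
  have hL : finslerLength Φ c = v := by
    have hspeed : ∀ x : ℝ, Φ.F (c x) (deriv c x) = v := fun x => h.2.2.2.2.1 x 0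
    simp [finslerLength, curveLength, hspeed]
  rw [hL]
  nlinarith [b1, b2]

end Aux

/-- On a Finsler sphere `(Sⁿ, F)` with reversibility `λ` whose shortest nonconstant
geodesic loop has length at least `π(1+1/λ)`, every closed geodesic with a
self-intersection has length at least `2π(1+1/λ)` and energy at least
`2π²((λ+1)/λ)²`; consequently every closed geodesic of energy less than
`2π²((λ+1)/λ)²` has no self-intersections. -/
theorem self_intersection_length_bound
    (n : ℕ) (hn : 2 ≤ n) (Φ : FinslerMetric n) (lam : ℝ)
    (hlam : lam = reversibility Φ) (hlam1 : 1 ≤ lam)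
    (hloop : ∀ c, IsGeodesicLoop Φ c → Real.pi * (1 + 1 / lam) ≤ finslerLength Φ c) :
    (∀ c, IsClosedGeodesic Φ c → ¬ NoSelfIntersections c →
      2 * Real.pi * (1 + 1 / lam) ≤ finslerLength Φ c ∧
      2 * Real.pi ^ 2 * ((lam + 1) / lam) ^ 2 ≤ energy Φ c) ∧
    (∀ c, IsClosedGeodesic Φ c → energy Φ c < 2 * Real.pi ^ 2 * ((lam + 1) / lam) ^ 2 →
      NoSelfIntersections c) := by
  have hlam0 : (0:ℝ) < lam := lt_of_lt_of_le one_pos hlam1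
  have hBeq : Real.pi * (1 + 1 / lam) = Real.pi * ((lam + 1) / lam) := by
    field_simp
  have hBpos : 0 < Real.pi * (1 + 1 / lam) := by
    have : 0 < 1 + 1 / lam := by positivity
    exact mul_pos Real.pi_pos this
  have main : ∀ c, IsClosedGeodesic Φ c → ¬ NoSelfIntersections c →
      2 * Real.pi * (1 + 1 / lam) ≤ finslerLength Φ c ∧
      2 * Real.pi ^ 2 * ((lam + 1) / lam) ^ 2 ≤ energy Φ c := by
    intro c hc hnsi
    unfold NoSelfIntersections at hnsi
    push_neg at hnsi
    obtain ⟨s, hs, t, ht, heq, hne⟩ := hnsi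
    have hlen : 2 * (Real.pi * (1 + 1 / lam)) ≤ finslerLength Φ c := by
      rcases hne.lt_or_gt with hlt | hlt
      · exact key_length_bound Φ c hc _ hloop s t hs ht hlt heq
      · exact key_length_bound Φ c hc _ hloop t s ht hs hlt heq.symm
    constructor
    · linarith
    · set v : ℝ := Φ.F (c 0) (deriv c 0) with hv
      have hspeed : ∀ x : ℝ, Φ.F (c x) (deriv c x) = v := fun x => hc.2.2.2.2.1 x 0
      have hL : finslerLength Φ c = v := by
        simp [finslerLength, curveLength, hspeed]
      have hE : energy Φ c = v ^ 2 / 2 := by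
        simp [energy, hspeed]
        ring
      rw [hE]
      rw [hL] at hlen
      set A : ℝ := Real.pi * (1 + 1 / lam) with hA
      have hA0 : 0 < A := hBpos
      have hv2 : (2 * A) ^ 2 ≤ v ^ 2 := by nlinarith
      have : 2 * Real.pi ^ 2 * ((lam + 1) / lam) ^ 2 = (2 * A) ^ 2 / 2 := by
        rw [hA]
        field_simp
      rw [this]
      linarith
  refine ⟨main, ?_⟩
  intro c hc hE
  by_contra hnsi
  have := (main c hc hnsi).2
  linarith
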